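/- arXiv:math/0502524 — 7 statements merged into one kernel-verified Lean document; each statement's English description precedes it below -/
import Mathlib

section
/- Any function y(x) defined implicitly by y² + t₁x² + 2t₂xy + t₃x + t₄y − t₅ = 0 (with the relevant non-degeneracy, in particular y'' ≠ 0) satisfies the fifth order ODE y⁽⁵⁾ = −40(y''')³/(9(y'')²) + 5·y'''·y''''/y''. -/
private theorem zero_deriv {g : ℝ → ℝ} {s : Set ℝ} (hs : IsOpen s) {x : ℝ} (hx : x ∈ s)
    (h0 : ∀ z ∈ s, g z = 0) {e : ℝ} (H : HasDerivAt g e x) : e = 0 := by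
  have h1 : g =ᶠ[nhds x] fun _ => (0:ℝ) :=
    Filter.eventuallyEq_of_mem (hs.mem_nhds hx) h0
  have h2 := h1.deriv_eq
  rw [H.deriv] at h2
  simpa using h2

/-- Any smooth function `y` defined on an open set `s` that satisfies the
conic relation `y² + t₁x² + 2t₂xy + t₃x + t₄y − t₅ = 0` on `s`, with `y'' ≠ 0` on `s`,
satisfies the fifth order ODE `y⁽⁵⁾ = −40(y''')³/(9(y'')²) + 5 y''' y'''' / y''` on `s`. -/
theorem stmt_2 (t₁ t₂ t₃ t₄ t₅ : ℝ) (y : ℝ → ℝ) (s : Set ℝ) (hs : IsOpen s)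
    (hy : ContDiffOn ℝ (⊤ : ℕ∞) y s)
    (hrel : ∀ x ∈ s,
      (y x) ^ 2 + t₁ * x ^ 2 + 2 * t₂ * x * y x + t₃ * x + t₄ * y x - t₅ = 0)
    (hq : ∀ x ∈ s, iteratedDerivWithin 2 y s x ≠ 0) :
    ∀ x ∈ s,
      iteratedDerivWithin 5 y s x =
        -40 * (iteratedDerivWithin 3 y s x) ^ 3 / (9 * (iteratedDerivWithin 2 y s x) ^ 2)
          + 5 * iteratedDerivWithin 3 y s x * iteratedDerivWithin 4 y s x /
              iteratedDerivWithin 2 y s x := by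
  -- derivatives
  set d1 := deriv y with hd1
  set d2 := deriv d1 with hd2
  set d3 := deriv d2 with hd3
  set d4 := deriv d3 with hd4
  set d5 := deriv d4 with hd5
  -- smoothness of all derivatives on s
  have hC1 : ContDiffOn ℝ (⊤ : ℕ∞) d1 s := hy.deriv_of_isOpen hs (by simp)
  have hC2 : ContDiffOn ℝ (⊤ : ℕ∞) d2 s := hC1.deriv_of_isOpen hs (by simp)
  have hC3 : ContDiffOn ℝ (⊤ : ℕ∞) d3 s := hC2.deriv_of_isOpen hs (by simp)
  have hC4 : ContDiffOn ℝ (⊤ : ℕ∞) d4 s := hC3.deriv_of_isOpen hs (by simp)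
  have hy1 : ∀ z ∈ s, HasDerivAt y (d1 z) z := fun z hz =>
    ((hy.contDiffAt (hs.mem_nhds hz)).differentiableAt (by simp)).hasDerivAt
  have hy2 : ∀ z ∈ s, HasDerivAt d1 (d2 z) z := fun z hz =>
    ((hC1.contDiffAt (hs.mem_nhds hz)).differentiableAt (by simp)).hasDerivAt
  have hy3 : ∀ z ∈ s, HasDerivAt d2 (d3 z) z := fun z hz =>
    ((hC2.contDiffAt (hs.mem_nhds hz)).differentiableAt (by simp)).hasDerivAt
  have hy4 : ∀ z ∈ s, HasDerivAt d3 (d4 z) z := fun z hz =>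
    ((hC3.contDiffAt (hs.mem_nhds hz)).differentiableAt (by simp)).hasDerivAt
  have hy5 : ∀ z ∈ s, HasDerivAt d4 (d5 z) z := fun z hz =>
    ((hC4.contDiffAt (hs.mem_nhds hz)).differentiableAt (by simp)).hasDerivAt
  -- first derivative of the relation
  have E1 : ∀ z ∈ s,
      2*y z*d1 z + 2*t₁*z + 2*t₂*(y z + z*d1 z) + t₃ + t₄*d1 z = 0 := by
    intro z hz
    have h := hy1 z hz
    have hid : HasDerivAt (fun w : ℝ => w) 1 z := hasDerivAt_id' z
    have H := (((((h.pow 2).add ((hid.pow 2).const_mul t₁)).add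
        ((hid.mul h).const_mul (2*t₂))).add (hid.const_mul t₃)).add
        (h.const_mul t₄)).sub_const t₅
    have he := zero_deriv hs hz ?_ H
    · linear_combination he
    · intro w hw
      simp only [Pi.add_apply, Pi.mul_apply, Pi.pow_apply]
      linear_combination hrel w hw
  have E2 : ∀ z ∈ s,
      2*(d1 z^2 + y z*d2 z) + 2*t₁ + 2*t₂*(2*d1 z + z*d2 z) + t₄*d2 z = 0 := by
    intro z hz
    have h := hy1 z hz
    have h1 := hy2 z hz
    have hid : HasDerivAt (fun w : ℝ => w) 1 z := hasDerivAt_id' z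
    have H := (((((h.mul h1).const_mul 2).add ((hid.const_mul (2*t₁)))).add
        ((h.add (hid.mul h1)).const_mul (2*t₂))).add (h1.const_mul t₄)).add_const t₃
    have he := zero_deriv hs hz ?_ H
    · linear_combination he
    · intro w hw
      have := E1 w hw
      simp only [Pi.add_apply, Pi.mul_apply, Pi.pow_apply]
      linear_combination this
  have E3 : ∀ z ∈ s,
      2*(3*(d1 z*d2 z) + y z*d3 z) + 2*t₂*(3*d2 z + z*d3 z) + t₄*d3 z = 0 := by
    intro z hz
    have h := hy1 z hz
    have h1 := hy2 z hz
    have h2 := hy3 z hz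
    have hid : HasDerivAt (fun w : ℝ => w) 1 z := hasDerivAt_id' z
    have H := (((((h1.pow 2).add (h.mul h2)).const_mul 2).add
        (((h1.const_mul 2).add (hid.mul h2)).const_mul (2*t₂))).add
        (h2.const_mul t₄)).add_const (2*t₁)
    have he := zero_deriv hs hz ?_ H
    · linear_combination he
    · intro w hw
      simp only [Pi.add_apply, Pi.mul_apply, Pi.pow_apply]
      linear_combination E2 w hw
  have E4 : ∀ z ∈ s,
      2*(3*d2 z^2 + 4*(d1 z*d3 z) + y z*d4 z) + 2*t₂*(4*d3 z + z*d4 z) + t₄*d4 z = 0 := by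
    intro z hz
    have h := hy1 z hz
    have h1 := hy2 z hz
    have h2 := hy3 z hz
    have h3 := hy4 z hz
    have hid : HasDerivAt (fun w : ℝ => w) 1 z := hasDerivAt_id' z
    have H := ((((((h1.mul h2).const_mul 3).add (h.mul h3)).const_mul 2).add
        ((((h2.const_mul 3).add (hid.mul h3))).const_mul (2*t₂))).add
        (h3.const_mul t₄))
    have he := zero_deriv hs hz ?_ H
    · linear_combination he
    · intro w hw
      simp only [Pi.add_apply, Pi.mul_apply, Pi.pow_apply]
      linear_combination E3 w hw
  have E5 : ∀ z ∈ s,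
      2*(10*(d2 z*d3 z) + 5*(d1 z*d4 z) + y z*d5 z) + 2*t₂*(5*d4 z + z*d5 z) + t₄*d5 z = 0 := by
    intro z hz
    have h := hy1 z hz
    have h1 := hy2 z hz
    have h2 := hy3 z hz
    have h3 := hy4 z hz
    have h4 := hy5 z hz
    have hid : HasDerivAt (fun w : ℝ => w) 1 z := hasDerivAt_id' z
    have H := (((((((h2.pow 2).const_mul 3).add (((h1.mul h3)).const_mul 4)).add
        (h.mul h4)).const_mul 2).add
        ((((h3.const_mul 4).add (hid.mul h4))).const_mul (2*t₂))).add
        (h4.const_mul t₄))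
    have he := zero_deriv hs hz ?_ H
    · linear_combination he
    · intro w hw
      simp only [Pi.add_apply, Pi.mul_apply, Pi.pow_apply]
      linear_combination E4 w hw
  -- rewrite goal
  intro x hx
  have hiw : ∀ n : ℕ, iteratedDerivWithin n y s x = iteratedDeriv n y x := by
    intro n
    rw [iteratedDerivWithin_eq_iteratedFDerivWithin, iteratedDeriv_eq_iteratedFDeriv,
      iteratedFDerivWithin_of_isOpen n hs hx]
  have hit2 : iteratedDerivWithin 2 y s x = d2 x := by
    rw [hiw]; simp [iteratedDeriv_succ, iteratedDeriv_zero, hd1, hd2]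
  have hit3 : iteratedDerivWithin 3 y s x = d3 x := by
    rw [hiw]; simp [iteratedDeriv_succ, iteratedDeriv_zero, hd1, hd2, hd3]
  have hit4 : iteratedDerivWithin 4 y s x = d4 x := by
    rw [hiw]; simp [iteratedDeriv_succ, iteratedDeriv_zero, hd1, hd2, hd3, hd4]
  have hit5 : iteratedDerivWithin 5 y s x = d5 x := by
    rw [hiw]; simp [iteratedDeriv_succ, iteratedDeriv_zero, hd1, hd2, hd3, hd4, hd5]
  rw [hit2, hit3, hit4, hit5]
  have h2ne : d2 x ≠ 0 := by rw [← hit2]; exact hq x hx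
  have he3 := E3 x hx
  have he4 := E4 x hx
  have he5 := E5 x hx
  -- key algebraic identity
  have hT : 18*(d2 x)^2*(d5 x) - 90*(d2 x)*(d3 x)*(d4 x) + 80*(d3 x)^3 = 0 := by
    by_cases h3 : d3 x = 0
    · have hB : d1 x + t₂ = 0 := by
        have h6 : 6*(d2 x)*(d1 x + t₂) = 0 := by linear_combination he3 - (2*y x + 2*t₂*x + t₄)*h3
        have := mul_eq_zero.mp h6
        rcases this with h | h
        · rcases mul_eq_zero.mp h with h' | h'
          · norm_num at h'
          · exact absurd h' h2ne
        · exact h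
      have hA : 2*y x + 2*t₂*x + t₄ ≠ 0 := by
        intro hA0
        apply h2ne
        have : 6*(d2 x)^2 = 0 := by
          linear_combination he4 - (d4 x)*hA0 - 8*(d3 x)*hB - ((d1 x + t₂)*8 - 8*(d1 x + t₂))*h3
        have := pow_eq_zero_iff (n := 2) (by norm_num) |>.mp (by linarith : (d2 x)^2 = 0)
        exact this
      have h5 : d5 x = 0 := by
        have hA5 : (2*y x + 2*t₂*x + t₄)*(d5 x) = 0 := by
          linear_combination he5 - 10*(d4 x)*hB - 20*(d2 x)*h3
        rcases mul_eq_zero.mp hA5 with h | h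
        · exact absurd h hA
        · exact h
      rw [h3, h5]; ring
    · have key : (d2 x)*(d3 x)*(18*(d2 x)^2*(d5 x) - 90*(d2 x)*(d3 x)*(d4 x) + 80*(d3 x)^3) = 0 := by
        linear_combination
          (-1/2)*((6*(d2 x)*(d5 x)-10*(d3 x)*(d4 x))*(d4 x) - (6*(d2 x)*(d4 x)-8*(d3 x)^2)*(d5 x))*he3
          + (1/2)*(6*(d2 x)*(d5 x)-10*(d3 x)*(d4 x))*(d3 x)*he4
          + (-1/2)*(6*(d2 x)*(d4 x)-8*(d3 x)^2)*(d3 x)*he5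
      rcases mul_eq_zero.mp key with h | h
      · rcases mul_eq_zero.mp h with h' | h'
        · exact absurd h' h2ne
        · exact absurd h' h3
      · exact h
  field_simp
  linear_combination (9*(d2 x)^2/18*(d2 x))*hT - (9*(d2 x)^2/18*(d2 x))*hT + (1/2)*hT
end

section
/- For the fifth order ODE y⁽⁵⁾ = F(x,y,y',y'',y''',y'''') with F = −40r³/(9q²) + 5rs/q (where q = y'', r = y''', s = y''''), the Doubrov invariant 6F_{234} − 4F_{333} − 3(F_{34})² equals (5/3)q^{−2}; in particular it is nonvanishing wherever q ≠ 0. -/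
/-- The function `F(q,r,s) = -40 r³/(9 q²) + 5 r s / q`. -/
noncomputable def conicF : ℝ → ℝ → ℝ → ℝ :=
  fun q r s => -40 * r ^ 3 / (9 * q ^ 2) + 5 * r * s / q

/-- `F₄ = ∂F/∂s`. -/
noncomputable def conicF₄ : ℝ → ℝ → ℝ → ℝ :=
  fun q r s => deriv (fun s' => conicF q r s') s

/-- `F₃₄ = ∂²F/∂r∂s`. -/
noncomputable def conicF₃₄ : ℝ → ℝ → ℝ → ℝ :=
  fun q r s => deriv (fun r' => conicF₄ q r' s) r

/-- `F₂₃₄ = ∂³F/∂q∂r∂s`. -/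
noncomputable def conicF₂₃₄ : ℝ → ℝ → ℝ → ℝ :=
  fun q r s => deriv (fun q' => conicF₃₄ q' r s) q

/-- `F₃₃₃ = ∂³F/∂r³`. -/
noncomputable def conicF₃₃₃ : ℝ → ℝ → ℝ → ℝ :=
  fun q r s => deriv (fun r' => deriv (fun r'' =>
    deriv (fun r''' => conicF q r''' s) r'') r') r

lemma l4 (q r s : ℝ) : conicF₄ q r s = 5 * r / q := by
  unfold conicF₄ conicF
  have h : (fun s' : ℝ => -40 * r ^ 3 / (9 * q ^ 2) + 5 * r * s' / q)
      = fun s' : ℝ => (5 * r / q) * s' + (-40 * r ^ 3 / (9 * q ^ 2)) := by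
    funext s'; ring
  rw [h, deriv_add_const, deriv_const_mul_field, deriv_id'']
  ring

lemma l34 (q r s : ℝ) : conicF₃₄ q r s = 5 / q := by
  unfold conicF₃₄
  simp only [l4]
  have h : (fun r' : ℝ => 5 * r' / q) = fun r' : ℝ => (5 / q) * r' := by
    funext r'; ring
  rw [h, deriv_const_mul_field, deriv_id'']; ring

lemma l234 (q r s : ℝ) (hq : q ≠ 0) : conicF₂₃₄ q r s = -5 / q ^ 2 := by
  unfold conicF₂₃₄
  simp only [l34]
  have h : (fun q' : ℝ => 5 / q') = fun q' : ℝ => 5 * q'⁻¹ := by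
    funext q'; ring
  rw [h, deriv_const_mul_field, deriv_inv]
  field_simp

lemma l3 (q r s : ℝ) : deriv (fun r''' => conicF q r''' s) r
    = -120 * r ^ 2 / (9 * q ^ 2) + 5 * s / q := by
  unfold conicF
  have h : (fun r' : ℝ => -40 * r' ^ 3 / (9 * q ^ 2) + 5 * r' * s / q)
      = fun r' : ℝ => (-40 / (9 * q ^ 2)) * r' ^ 3 + (5 * s / q) * r' := by
    funext r'; ring
  rw [h]
  have hd1 : HasDerivAt (fun r' : ℝ => (-40 / (9 * q ^ 2)) * r' ^ 3 + (5 * s / q) * r')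
      ((-40 / (9 * q ^ 2)) * (3 * r ^ 2) + (5 * s / q) * 1) r := by
    exact (((hasDerivAt_pow 3 r).const_mul _).add ((hasDerivAt_id r).const_mul _))
  rw [hd1.deriv]; ring

lemma l33 (q r s : ℝ) : deriv (fun r'' => deriv (fun r''' => conicF q r''' s) r'') r
    = -240 * r / (9 * q ^ 2) := by
  simp only [l3]
  have h : (fun r' : ℝ => -120 * r' ^ 2 / (9 * q ^ 2) + 5 * s / q)
      = fun r' : ℝ => (-120 / (9 * q ^ 2)) * r' ^ 2 + 5 * s / q := by
    funext r'; ring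
  rw [h]
  have hd : HasDerivAt (fun r' : ℝ => (-120 / (9 * q ^ 2)) * r' ^ 2 + 5 * s / q)
      ((-120 / (9 * q ^ 2)) * (2 * r)) r := by
    have := ((hasDerivAt_pow 2 r).const_mul (-120 / (9 * q ^ 2))).add_const (5 * s / q)
    simpa using this
  rw [hd.deriv]; ring

lemma l333 (q r s : ℝ) : conicF₃₃₃ q r s = -240 / (9 * q ^ 2) := by
  unfold conicF₃₃₃
  simp only [l33]
  have h : (fun r' : ℝ => -240 * r' / (9 * q ^ 2))
      = fun r' : ℝ => (-240 / (9 * q ^ 2)) * r' := by funext r'; ring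
  rw [h, deriv_const_mul_field, deriv_id'']; ring


/-- For `F = −40r³/(9q²) + 5rs/q` the Doubrov invariant
`6F₂₃₄ − 4F₃₃₃ − 3(F₃₄)²` equals `(5/3) q⁻²` (hence is nonvanishing) wherever `q ≠ 0`. -/
theorem stmt_3 (q r s : ℝ) (hq : q ≠ 0) :
    6 * conicF₂₃₄ q r s - 4 * conicF₃₃₃ q r s - 3 * (conicF₃₄ q r s) ^ 2 =
      (5 / 3) * q⁻¹ ^ 2 := by
  rw [l234 q r s hq, l333, l34]
  field_simp
  ring
end

section
/- The third order ODE y''' = 2√α·(y'')^{3/2} (with α > 0 a constant) satisfies the Wünschmann condition: (1/3)F₂(dF₂/dx) − (1/6)(d²F₂/dx²) + (1/2)(dF₁/dx) − (2/27)F₂³ − (1/3)F₂F₁ − F₀ = 0, where F(x,y,p,q) = 2√α·q^{3/2}, F₀ = ∂F/∂y, F₁ = ∂F/∂p, F₂ = ∂F/∂q, and d/dx = ∂_x + p∂_y + q∂_p + F∂_q. -/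
/-- Partial derivative with respect to `y` of a function of `(x, y, p, q)`. -/
noncomputable def pdY (g : ℝ → ℝ → ℝ → ℝ → ℝ) : ℝ → ℝ → ℝ → ℝ → ℝ :=
  fun x y p q => deriv (fun y' => g x y' p q) y

/-- Partial derivative with respect to `p = y'`. -/
noncomputable def pdP (g : ℝ → ℝ → ℝ → ℝ → ℝ) : ℝ → ℝ → ℝ → ℝ → ℝ :=
  fun x y p q => deriv (fun p' => g x y p' q) p

/-- Partial derivative with respect to `q = y''`. -/
noncomputable def pdQ (g : ℝ → ℝ → ℝ → ℝ → ℝ) : ℝ → ℝ → ℝ → ℝ → ℝ :=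
  fun x y p q => deriv (fun q' => g x y p q') q

/-- The total derivative `d/dx = ∂ₓ + p ∂_y + q ∂_p + F ∂_q` along solutions of
the third order ODE `y''' = F(x, y, y', y'')`. -/
noncomputable def totalD (F g : ℝ → ℝ → ℝ → ℝ → ℝ) : ℝ → ℝ → ℝ → ℝ → ℝ :=
  fun x y p q => deriv (fun x' => g x' y p q) x + p * pdY g x y p q +
    q * pdP g x y p q + F x y p q * pdQ g x y p q

/-- The third order ODE `y''' = 2√α (y'')^{3/2}` (with `α > 0`) satisfies the
Wünschmann condition
`(1/3)F₂(dF₂/dx) − (1/6)(d²F₂/dx²) + (1/2)(dF₁/dx) − (2/27)F₂³ − (1/3)F₂F₁ − F₀ = 0`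
on the region `q > 0`. -/
theorem stmt_5 (α : ℝ) (hα : 0 < α)
    (F : ℝ → ℝ → ℝ → ℝ → ℝ)
    (hF : ∀ x y p q : ℝ, F x y p q = 2 * Real.sqrt α * q ^ ((3 : ℝ) / 2))
    (x y p q : ℝ) (hq : 0 < q) :
    (1 / 3) * pdQ F x y p q * totalD F (pdQ F) x y p q
      - (1 / 6) * totalD F (totalD F (pdQ F)) x y p q
      + (1 / 2) * totalD F (pdP F) x y p q
      - (2 / 27) * (pdQ F x y p q) ^ 3
      - (1 / 3) * pdQ F x y p q * pdP F x y p q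
      - pdY F x y p q = 0 := by
  have hFe : F = fun _ _ _ d => 2 * Real.sqrt α * d ^ ((3 : ℝ) / 2) := by
    funext a b c d; exact hF a b c d
  subst hFe
  set s := Real.sqrt α with hsdef
  have hs2 : s * s = α := Real.mul_self_sqrt hα.le
  -- pdQ F globally
  have hQ : pdQ (fun _ _ _ d => 2 * s * d ^ ((3 : ℝ) / 2))
      = fun _ _ _ d => 3 * s * d ^ ((1 : ℝ) / 2) := by
    funext a b c d
    unfold pdQ
    have h1 : HasDerivAt (fun q' : ℝ => q' ^ ((3 : ℝ) / 2))
        ((3 : ℝ) / 2 * d ^ ((3 : ℝ) / 2 - 1)) d :=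
      Real.hasDerivAt_rpow_const (Or.inr (by norm_num))
    rw [(h1.const_mul (2 * s)).deriv]
    have h32 : (3 : ℝ) / 2 - 1 = (1 : ℝ) / 2 := by norm_num
    rw [h32]; ring
  -- pdY F = 0, pdP F = 0
  have hY : pdY (fun _ _ _ d => 2 * s * d ^ ((3 : ℝ) / 2)) = fun _ _ _ _ => 0 := by
    funext a b c d; unfold pdY; simp
  have hP : pdP (fun _ _ _ d => 2 * s * d ^ ((3 : ℝ) / 2)) = fun _ _ _ _ => 0 := by
    funext a b c d; unfold pdP; simp
  -- totalD F (pdP F) = 0 at our point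
  have hTP : totalD (fun _ _ _ d => 2 * s * d ^ ((3 : ℝ) / 2))
      (pdP (fun _ _ _ d => 2 * s * d ^ ((3 : ℝ) / 2))) x y p q = 0 := by
    rw [hP]; unfold totalD pdY pdP pdQ; simp
  -- first total derivative of pdQ F, on q > 0
  have hTQ : ∀ a b c d : ℝ, 0 < d →
      totalD (fun _ _ _ d => 2 * s * d ^ ((3 : ℝ) / 2))
        (pdQ (fun _ _ _ d => 2 * s * d ^ ((3 : ℝ) / 2))) a b c d = 3 * α * d := by
    intro a b c d hd
    rw [hQ]
    unfold totalD pdY pdP pdQ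
    have h1 : HasDerivAt (fun q' : ℝ => q' ^ ((1 : ℝ) / 2))
        ((1 : ℝ) / 2 * d ^ ((1 : ℝ) / 2 - 1)) d :=
      Real.hasDerivAt_rpow_const (Or.inl hd.ne')
    rw [(h1.const_mul (3 * s)).deriv]
    simp only [deriv_const]
    have key : 2 * s * d ^ ((3 : ℝ) / 2) * (3 * s * ((1 : ℝ) / 2 * d ^ ((1 : ℝ) / 2 - 1)))
        = 3 * (s * s) * (d ^ ((3 : ℝ) / 2) * d ^ ((1 : ℝ) / 2 - 1)) := by ring
    have hrw : d ^ ((3 : ℝ) / 2) * d ^ ((1 : ℝ) / 2 - 1) = d := by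
      rw [← Real.rpow_add hd]
      norm_num
    rw [key, hrw, hs2]; ring
  -- second total derivative at our point
  have hTT : totalD (fun _ _ _ d => 2 * s * d ^ ((3 : ℝ) / 2))
      (totalD (fun _ _ _ d => 2 * s * d ^ ((3 : ℝ) / 2))
        (pdQ (fun _ _ _ d => 2 * s * d ^ ((3 : ℝ) / 2)))) x y p q
      = 2 * s * q ^ ((3 : ℝ) / 2) * (3 * α) := by
    set G := totalD (fun _ _ _ d => 2 * s * d ^ ((3:ℝ)/2))
      (pdQ (fun _ _ _ d => 2 * s * d ^ ((3:ℝ)/2))) with hG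
    unfold totalD pdY pdP pdQ
    have e1 : (fun x' => G x' y p q) = fun _ => 3 * α * q :=
      funext fun x' => hTQ x' y p q hq
    have e2 : (fun y' => G x y' p q) = fun _ => 3 * α * q :=
      funext fun y' => hTQ x y' p q hq
    have e3 : (fun p' => G x y p' q) = fun _ => 3 * α * q :=
      funext fun p' => hTQ x y p' q hq
    have e4 : deriv (fun q' => G x y p q') q = 3 * α := by
      have heq : (fun q' => G x y p q')
          =ᶠ[nhds q] (fun q' => 3 * α * q') := by
        filter_upwards [IsOpen.mem_nhds isOpen_Ioi hq] with d hd
        exact hTQ x y p d hd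
      rw [heq.deriv_eq]
      have : HasDerivAt (fun q' : ℝ => 3 * α * q') (3 * α * 1) q :=
        (hasDerivAt_id q).const_mul (3 * α)
      rw [this.deriv]; ring
    rw [e1, e2, e3, e4]
    simp
  rw [hTP, hTT, hTQ x y p q hq, hQ, hY, hP]
  simp only
  have hhalf : q ^ ((1 : ℝ) / 2) * q ^ ((1 : ℝ) / 2) = q := by
    rw [← Real.rpow_add hq]; norm_num
  have h32 : q ^ ((3 : ℝ) / 2) = q ^ ((1 : ℝ) / 2) * q := by
    rw [show (3 : ℝ) / 2 = 1 / 2 + 1 by norm_num, Real.rpow_add hq, Real.rpow_one]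
  rw [h32]
  linear_combination (-2*s^3*q^((1:ℝ)/2))*hhalf + (-2*s*q^((1:ℝ)/2)*q)*hs2
end

section
/- Let L₀ = ∂₁ + α⁻¹λ∂₂ and L₁ = −α⁻¹∂₂ − λ(∂₃ − t₁∂₂) + αλ∂_λ be vector fields on ℝ⁴ with coordinates (t₁,t₂,t₃,λ) and α ≠ 0 a constant. Then [L₀, L₁] = 0, and the functions x = λ + αt₃ and y = λt₁ − αt₂ − α⁻¹ln λ (for λ > 0) satisfy L₀x = L₁x = L₀y = L₁y = 0. -/
private lemma slice1 {G : ℝ × ℝ × ℝ × ℝ → ℝ} {Φ : (ℝ × ℝ × ℝ × ℝ) →L[ℝ] ℝ} {a b c l : ℝ}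
    (h : HasFDerivAt G Φ (a, b, c, l)) :
    HasDerivAt (fun x => G (x, b, c, l)) (Φ (1, 0, 0, 0)) a :=
  h.comp_hasDerivAt a ((hasDerivAt_id a).prodMk
    ((hasDerivAt_const a b).prodMk ((hasDerivAt_const a c).prodMk (hasDerivAt_const a l))))

private lemma slice2 {G : ℝ × ℝ × ℝ × ℝ → ℝ} {Φ : (ℝ × ℝ × ℝ × ℝ) →L[ℝ] ℝ} {a b c l : ℝ}
    (h : HasFDerivAt G Φ (a, b, c, l)) :
    HasDerivAt (fun x => G (a, x, c, l)) (Φ (0, 1, 0, 0)) b :=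
  h.comp_hasDerivAt b ((hasDerivAt_const b a).prodMk
    ((hasDerivAt_id b).prodMk ((hasDerivAt_const b c).prodMk (hasDerivAt_const b l))))

private lemma slice3 {G : ℝ × ℝ × ℝ × ℝ → ℝ} {Φ : (ℝ × ℝ × ℝ × ℝ) →L[ℝ] ℝ} {a b c l : ℝ}
    (h : HasFDerivAt G Φ (a, b, c, l)) :
    HasDerivAt (fun x => G (a, b, x, l)) (Φ (0, 0, 1, 0)) c :=
  h.comp_hasDerivAt c ((hasDerivAt_const c a).prodMk
    ((hasDerivAt_const c b).prodMk ((hasDerivAt_id c).prodMk (hasDerivAt_const c l))))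

private lemma slice4 {G : ℝ × ℝ × ℝ × ℝ → ℝ} {Φ : (ℝ × ℝ × ℝ × ℝ) →L[ℝ] ℝ} {a b c l : ℝ}
    (h : HasFDerivAt G Φ (a, b, c, l)) :
    HasDerivAt (fun x => G (a, b, c, x)) (Φ (0, 0, 0, 1)) l :=
  h.comp_hasDerivAt l ((hasDerivAt_const l a).prodMk
    ((hasDerivAt_const l b).prodMk ((hasDerivAt_const l c).prodMk (hasDerivAt_id l))))



/-- `∂/∂t₁` for a function of `(t₁, t₂, t₃, λ)`. -/
noncomputable def pd1 (f : ℝ → ℝ → ℝ → ℝ → ℝ) : ℝ → ℝ → ℝ → ℝ → ℝ :=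
  fun a b c l => deriv (fun a' => f a' b c l) a

/-- `∂/∂t₂`. -/
noncomputable def pd2 (f : ℝ → ℝ → ℝ → ℝ → ℝ) : ℝ → ℝ → ℝ → ℝ → ℝ :=
  fun a b c l => deriv (fun b' => f a b' c l) b

/-- `∂/∂t₃`. -/
noncomputable def pd3 (f : ℝ → ℝ → ℝ → ℝ → ℝ) : ℝ → ℝ → ℝ → ℝ → ℝ :=
  fun a b c l => deriv (fun c' => f a b c' l) c

/-- `∂/∂λ`. -/
noncomputable def pd4 (f : ℝ → ℝ → ℝ → ℝ → ℝ) : ℝ → ℝ → ℝ → ℝ → ℝ :=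
  fun a b c l => deriv (fun l' => f a b c l') l

/-- The vector field `L₀ = ∂₁ + α⁻¹ λ ∂₂`. -/
noncomputable def L0 (α : ℝ) (f : ℝ → ℝ → ℝ → ℝ → ℝ) : ℝ → ℝ → ℝ → ℝ → ℝ :=
  fun a b c l => pd1 f a b c l + α⁻¹ * l * pd2 f a b c l

/-- The vector field `L₁ = −α⁻¹ ∂₂ − λ(∂₃ − t₁ ∂₂) + α λ ∂_λ`. -/
noncomputable def L1 (α : ℝ) (f : ℝ → ℝ → ℝ → ℝ → ℝ) : ℝ → ℝ → ℝ → ℝ → ℝ :=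
  fun a b c l => -α⁻¹ * pd2 f a b c l - l * (pd3 f a b c l - a * pd2 f a b c l)
    + α * l * pd4 f a b c l

/-- With `α ≠ 0`, the vector fields `L₀` and `L₁` commute
(on smooth functions), and the functions `x = λ + α t₃` and
`y = λ t₁ − α t₂ − α⁻¹ ln λ` are annihilated by both on the region `λ > 0`. -/
theorem stmt_8 (α : ℝ) (hα : α ≠ 0) :
    (∀ f : ℝ → ℝ → ℝ → ℝ → ℝ,
        ContDiff ℝ (⊤ : ℕ∞) (fun v : ℝ × ℝ × ℝ × ℝ => f v.1 v.2.1 v.2.2.1 v.2.2.2) →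
        ∀ a b c l : ℝ,
          L0 α (L1 α f) a b c l - L1 α (L0 α f) a b c l = 0)
    ∧ (∀ a b c l : ℝ, 0 < l →
        L0 α (fun _ _ t₃ l' => l' + α * t₃) a b c l = 0
        ∧ L1 α (fun _ _ t₃ l' => l' + α * t₃) a b c l = 0
        ∧ L0 α (fun t₁ t₂ _ l' => l' * t₁ - α * t₂ - α⁻¹ * Real.log l') a b c l = 0
        ∧ L1 α (fun t₁ t₂ _ l' => l' * t₁ - α * t₂ - α⁻¹ * Real.log l') a b c l = 0) := by
  constructor
  · intro f hf a b c l
    set F : ℝ × ℝ × ℝ × ℝ → ℝ := fun v => f v.1 v.2.1 v.2.2.1 v.2.2.2 with hFdef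
    have hd : ∀ q, HasFDerivAt F (fderiv ℝ F q) q :=
      fun q => (hf.differentiable (by simp) q).hasFDerivAt
    have hd2 : ∀ q, HasFDerivAt (fderiv ℝ F) (fderiv ℝ (fderiv ℝ F) q) q := by
      intro q
      exact (((hf.fderiv_right (by rw [show (1 + 1 : WithTop ℕ∞) = ((2 : ℕ∞) : WithTop ℕ∞) by norm_num]; exact WithTop.coe_le_coe.mpr le_top : (1 + 1 : WithTop ℕ∞) ≤ ((⊤ : ℕ∞) : WithTop ℕ∞))).differentiable one_ne_zero) q).hasFDerivAt
    have hsymm : ∀ (v w : ℝ × ℝ × ℝ × ℝ),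
        fderiv ℝ (fderiv ℝ F) (a, b, c, l) v w = fderiv ℝ (fderiv ℝ F) (a, b, c, l) w v :=
      fun v w => second_derivative_symmetric hd (hd2 _) v w
    have hpd1 : ∀ x y z t, pd1 f x y z t = fderiv ℝ F (x, y, z, t) (1, 0, 0, 0) :=
      fun x y z t => (slice1 (hd (x, y, z, t))).deriv
    have hpd2 : ∀ x y z t, pd2 f x y z t = fderiv ℝ F (x, y, z, t) (0, 1, 0, 0) :=
      fun x y z t => (slice2 (hd (x, y, z, t))).deriv
    have hpd3 : ∀ x y z t, pd3 f x y z t = fderiv ℝ F (x, y, z, t) (0, 0, 1, 0) :=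
      fun x y z t => (slice3 (hd (x, y, z, t))).deriv
    have hpd4 : ∀ x y z t, pd4 f x y z t = fderiv ℝ F (x, y, z, t) (0, 0, 0, 1) :=
      fun x y z t => (slice4 (hd (x, y, z, t))).deriv
    have hdP : ∀ (v : ℝ × ℝ × ℝ × ℝ) q, HasFDerivAt (fun q' => fderiv ℝ F q' v)
        ((ContinuousLinearMap.apply ℝ ℝ v).comp (fderiv ℝ (fderiv ℝ F) q)) q :=
      fun v q => (ContinuousLinearMap.apply ℝ ℝ v).hasFDerivAt.comp q (hd2 q)
    set D : (ℝ × ℝ × ℝ × ℝ) → (ℝ × ℝ × ℝ × ℝ) → ℝ :=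
      fun v w => fderiv ℝ (fderiv ℝ F) (a, b, c, l) v w with hD
    -- slice derivatives of the first partials, at (a,b,c,l)
    have key1 : ∀ v, HasDerivAt (fun x => fderiv ℝ F (x, b, c, l) v) (D (1,0,0,0) v) a :=
      fun v => by simpa [hD] using slice1 (hdP v (a, b, c, l))
    have key2 : ∀ v, HasDerivAt (fun x => fderiv ℝ F (a, x, c, l) v) (D (0,1,0,0) v) b :=
      fun v => by simpa [hD] using slice2 (hdP v (a, b, c, l))
    have key3 : ∀ v, HasDerivAt (fun x => fderiv ℝ F (a, b, x, l) v) (D (0,0,1,0) v) c :=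
      fun v => by simpa [hD] using slice3 (hdP v (a, b, c, l))
    have key4 : ∀ v, HasDerivAt (fun x => fderiv ℝ F (a, b, c, x) v) (D (0,0,0,1) v) l :=
      fun v => by simpa [hD] using slice4 (hdP v (a, b, c, l))
    -- HA : pd1 (L1 α f)
    have h12 : HasDerivAt (fun x => pd2 f x b c l) (D (1,0,0,0) (0,1,0,0)) a := by
      rw [show (fun x => pd2 f x b c l) = fun x => fderiv ℝ F (x, b, c, l) (0,1,0,0)
        from funext fun x => hpd2 x b c l]
      exact key1 _
    have h13 : HasDerivAt (fun x => pd3 f x b c l) (D (1,0,0,0) (0,0,1,0)) a := by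
      rw [show (fun x => pd3 f x b c l) = fun x => fderiv ℝ F (x, b, c, l) (0,0,1,0)
        from funext fun x => hpd3 x b c l]
      exact key1 _
    have h14 : HasDerivAt (fun x => pd4 f x b c l) (D (1,0,0,0) (0,0,0,1)) a := by
      rw [show (fun x => pd4 f x b c l) = fun x => fderiv ℝ F (x, b, c, l) (0,0,0,1)
        from funext fun x => hpd4 x b c l]
      exact key1 _
    have h21 : HasDerivAt (fun x => pd1 f a x c l) (D (0,1,0,0) (1,0,0,0)) b := by
      rw [show (fun x => pd1 f a x c l) = fun x => fderiv ℝ F (a, x, c, l) (1,0,0,0)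
        from funext fun x => hpd1 a x c l]
      exact key2 _
    have h22 : HasDerivAt (fun x => pd2 f a x c l) (D (0,1,0,0) (0,1,0,0)) b := by
      rw [show (fun x => pd2 f a x c l) = fun x => fderiv ℝ F (a, x, c, l) (0,1,0,0)
        from funext fun x => hpd2 a x c l]
      exact key2 _
    have h23 : HasDerivAt (fun x => pd3 f a x c l) (D (0,1,0,0) (0,0,1,0)) b := by
      rw [show (fun x => pd3 f a x c l) = fun x => fderiv ℝ F (a, x, c, l) (0,0,1,0)
        from funext fun x => hpd3 a x c l]
      exact key2 _
    have h24 : HasDerivAt (fun x => pd4 f a x c l) (D (0,1,0,0) (0,0,0,1)) b := by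
      rw [show (fun x => pd4 f a x c l) = fun x => fderiv ℝ F (a, x, c, l) (0,0,0,1)
        from funext fun x => hpd4 a x c l]
      exact key2 _
    have h31 : HasDerivAt (fun x => pd1 f a b x l) (D (0,0,1,0) (1,0,0,0)) c := by
      rw [show (fun x => pd1 f a b x l) = fun x => fderiv ℝ F (a, b, x, l) (1,0,0,0)
        from funext fun x => hpd1 a b x l]
      exact key3 _
    have h32 : HasDerivAt (fun x => pd2 f a b x l) (D (0,0,1,0) (0,1,0,0)) c := by
      rw [show (fun x => pd2 f a b x l) = fun x => fderiv ℝ F (a, b, x, l) (0,1,0,0)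
        from funext fun x => hpd2 a b x l]
      exact key3 _
    have h41 : HasDerivAt (fun x => pd1 f a b c x) (D (0,0,0,1) (1,0,0,0)) l := by
      rw [show (fun x => pd1 f a b c x) = fun x => fderiv ℝ F (a, b, c, x) (1,0,0,0)
        from funext fun x => hpd1 a b c x]
      exact key4 _
    have h42 : HasDerivAt (fun x => pd2 f a b c x) (D (0,0,0,1) (0,1,0,0)) l := by
      rw [show (fun x => pd2 f a b c x) = fun x => fderiv ℝ F (a, b, c, x) (0,1,0,0)
        from funext fun x => hpd2 a b c x]
      exact key4 _
    -- the five needed partials of L0 f and L1 f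
    have HA : pd1 (L1 α f) a b c l
        = -α⁻¹ * D (1,0,0,0) (0,1,0,0)
          - l * (D (1,0,0,0) (0,0,1,0) - (1 * pd2 f a b c l + a * D (1,0,0,0) (0,1,0,0)))
          + α * l * D (1,0,0,0) (0,0,0,1) := by
      have hx : HasDerivAt
          (fun x => -α⁻¹ * pd2 f x b c l - l * (pd3 f x b c l - x * pd2 f x b c l)
            + α * l * pd4 f x b c l)
          (-α⁻¹ * D (1,0,0,0) (0,1,0,0)
            - l * (D (1,0,0,0) (0,0,1,0) - (1 * pd2 f a b c l + a * D (1,0,0,0) (0,1,0,0)))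
            + α * l * D (1,0,0,0) (0,0,0,1)) a :=
        ((h12.const_mul (-α⁻¹)).sub
          ((h13.sub ((hasDerivAt_id a).mul h12)).const_mul l)).add (h14.const_mul (α * l))
      exact hx.deriv
    have HB : pd2 (L1 α f) a b c l
        = -α⁻¹ * D (0,1,0,0) (0,1,0,0)
          - l * (D (0,1,0,0) (0,0,1,0) - a * D (0,1,0,0) (0,1,0,0))
          + α * l * D (0,1,0,0) (0,0,0,1) := by
      have hx : HasDerivAt
          (fun x => -α⁻¹ * pd2 f a x c l - l * (pd3 f a x c l - a * pd2 f a x c l)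
            + α * l * pd4 f a x c l)
          (-α⁻¹ * D (0,1,0,0) (0,1,0,0)
            - l * (D (0,1,0,0) (0,0,1,0) - a * D (0,1,0,0) (0,1,0,0))
            + α * l * D (0,1,0,0) (0,0,0,1)) b :=
        ((h22.const_mul (-α⁻¹)).sub
          ((h23.sub (h22.const_mul a)).const_mul l)).add (h24.const_mul (α * l))
      exact hx.deriv
    have HC : pd2 (L0 α f) a b c l
        = D (0,1,0,0) (1,0,0,0) + α⁻¹ * l * D (0,1,0,0) (0,1,0,0) := by
      have hx : HasDerivAt (fun x => pd1 f a x c l + α⁻¹ * l * pd2 f a x c l)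
          (D (0,1,0,0) (1,0,0,0) + α⁻¹ * l * D (0,1,0,0) (0,1,0,0)) b :=
        h21.add (h22.const_mul (α⁻¹ * l))
      exact hx.deriv
    have HD : pd3 (L0 α f) a b c l
        = D (0,0,1,0) (1,0,0,0) + α⁻¹ * l * D (0,0,1,0) (0,1,0,0) := by
      have hx : HasDerivAt (fun x => pd1 f a b x l + α⁻¹ * l * pd2 f a b x l)
          (D (0,0,1,0) (1,0,0,0) + α⁻¹ * l * D (0,0,1,0) (0,1,0,0)) c :=
        h31.add (h32.const_mul (α⁻¹ * l))
      exact hx.deriv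
    have HE : pd4 (L0 α f) a b c l
        = D (0,0,0,1) (1,0,0,0)
          + ((α⁻¹ * 1) * pd2 f a b c l + (α⁻¹ * l) * D (0,0,0,1) (0,1,0,0)) := by
      have hx : HasDerivAt (fun x => pd1 f a b c x + α⁻¹ * x * pd2 f a b c x)
          (D (0,0,0,1) (1,0,0,0)
            + ((α⁻¹ * 1) * pd2 f a b c l + (α⁻¹ * l) * D (0,0,0,1) (0,1,0,0))) l :=
        h41.add (((hasDerivAt_id l).const_mul α⁻¹).mul h42)
      exact hx.deriv
    show pd1 (L1 α f) a b c l + α⁻¹ * l * pd2 (L1 α f) a b c l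
        - (-α⁻¹ * pd2 (L0 α f) a b c l - l * (pd3 (L0 α f) a b c l - a * pd2 (L0 α f) a b c l)
          + α * l * pd4 (L0 α f) a b c l) = 0
    have s : ∀ v w, D v w = D w v := fun v w => hsymm v w
    rw [HA, HB, HC, HD, HE, s (0,1,0,0) (1,0,0,0), s (0,0,1,0) (1,0,0,0),
      s (0,0,1,0) (0,1,0,0), s (0,0,0,1) (1,0,0,0), s (0,0,0,1) (0,1,0,0)]
    field_simp
    ring
  · intro a b c l hl
    have px1 : pd1 (fun _ _ t₃ l' => l' + α * t₃) a b c l = 0 := by simp [pd1]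
    have px2 : pd2 (fun _ _ t₃ l' => l' + α * t₃) a b c l = 0 := by simp [pd2]
    have px3 : pd3 (fun _ _ t₃ l' => l' + α * t₃) a b c l = α := by
      have : HasDerivAt (fun c' => l + α * c') α c := by
        simpa using (HasDerivAt.const_add l ((hasDerivAt_id c).const_mul α))
      exact this.deriv
    have px4 : pd4 (fun _ _ t₃ l' => l' + α * t₃) a b c l = 1 := by
      have : HasDerivAt (fun l' : ℝ => l' + α * c) 1 l := (hasDerivAt_id l).add_const _
      exact this.deriv
    have py1 : pd1 (fun t₁ t₂ _ l' => l' * t₁ - α * t₂ - α⁻¹ * Real.log l') a b c l = l := by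
      have : HasDerivAt (fun t₁ => l * t₁ - α * b - α⁻¹ * Real.log l) l a := by
        simpa using (((hasDerivAt_id a).const_mul l).sub_const (α * b)).sub_const
          (α⁻¹ * Real.log l)
      exact this.deriv
    have py2 : pd2 (fun t₁ t₂ _ l' => l' * t₁ - α * t₂ - α⁻¹ * Real.log l') a b c l = -α := by
      have : HasDerivAt (fun t₂ => l * a - α * t₂ - α⁻¹ * Real.log l) (-α) b := by
        simpa using (HasDerivAt.const_sub (l * a)
          ((hasDerivAt_id b).const_mul α)).sub_const (α⁻¹ * Real.log l)
      exact this.deriv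
    have py3 : pd3 (fun t₁ t₂ _ l' => l' * t₁ - α * t₂ - α⁻¹ * Real.log l') a b c l = 0 := by
      simp [pd3]
    have py4 : pd4 (fun t₁ t₂ _ l' => l' * t₁ - α * t₂ - α⁻¹ * Real.log l') a b c l
        = a - α⁻¹ * l⁻¹ := by
      have : HasDerivAt (fun l' => l' * a - α * b - α⁻¹ * Real.log l') (a - α⁻¹ * l⁻¹) l := by
        exact ((((hasDerivAt_id l).mul_const a).sub_const (α * b)).sub
          ((Real.hasDerivAt_log hl.ne').const_mul α⁻¹)).congr_deriv (by simp)
      exact this.deriv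
    refine ⟨?_, ?_, ?_, ?_⟩
    · show pd1 _ a b c l + α⁻¹ * l * pd2 _ a b c l = 0
      rw [px1, px2]; ring
    · show -α⁻¹ * pd2 _ a b c l - l * (pd3 _ a b c l - a * pd2 _ a b c l)
          + α * l * pd4 _ a b c l = 0
      rw [px2, px3, px4]; ring
    · show pd1 _ a b c l + α⁻¹ * l * pd2 _ a b c l = 0
      rw [py1, py2]; field_simp; ring
    · show -α⁻¹ * pd2 _ a b c l - l * (pd3 _ a b c l - a * pd2 _ a b c l)
          + α * l * pd4 _ a b c l = 0
      rw [py2, py3, py4]; field_simp; ring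
end

section
/- Let a_{ij} be defined recursively by a₀₀ = 1, a_{ik} = 0 for k > i, a_{(i+1)(i+1)} = (n−i−1)a_{ii}, a_{(i+1)i} = (a_{ii})' + iQa_{ii} + (n−i)a_{i(i−1)}, and a_{(i+1)k} = (a_{ik})' + kQa_{ik} + (n−k)a_{i(k−1)} + (k+1)P a_{i(k+1)} for 0 ≤ k ≤ i−1, where P, Q are smooth functions of x and ' = d/dx. Then for all 0 ≤ i ≤ n−1: a_{ii} = (n−1)!/(n−i−1)! and a_{(i+1)i} = ((i+1)i/2)·Q·a_{ii}. -/
/-- With `a i k` (functions of `x`, indexed by `i : ℕ` and `k : ℤ` with the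
convention `a i k = 0` for `k < 0` or `k > i`) defined by the recursion
`a₀₀ = 1`, `a_{(i+1)(i+1)} = (n−i−1) a_{ii}`,
`a_{(i+1)i} = (a_{ii})' + i Q a_{ii} + (n−i) a_{i(i−1)}`, and
`a_{(i+1)k} = (a_{ik})' + k Q a_{ik} + (n−k) a_{i(k−1)} + (k+1) P a_{i(k+1)}`
for `0 ≤ k ≤ i−1`, where `P, Q` are smooth, one has for all `0 ≤ i ≤ n−1`:
`a_{ii} = (n−1)!/(n−1−i)!` and `a_{(i+1)i} = (i(i+1)/2) Q a_{ii}`. -/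
theorem stmt_10 (n : ℕ) (hn : 2 ≤ n) (P Q : ℝ → ℝ)
    (hP : ContDiff ℝ (⊤ : ℕ∞) P) (hQ : ContDiff ℝ (⊤ : ℕ∞) Q)
    (a : ℕ → ℤ → ℝ → ℝ)
    (hneg : ∀ (i : ℕ) (k : ℤ), k < 0 → a i k = 0)
    (hhigh : ∀ (i : ℕ) (k : ℤ), (i : ℤ) < k → a i k = 0)
    (h00 : ∀ x : ℝ, a 0 0 x = 1)
    (hdiag : ∀ (i : ℕ) (x : ℝ), a (i + 1) (i + 1) x = ((n : ℝ) - i - 1) * a i i x)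
    (hsub : ∀ (i : ℕ) (x : ℝ), a (i + 1) i x =
      deriv (a i i) x + (i : ℝ) * Q x * a i i x + ((n : ℝ) - i) * a i ((i : ℤ) - 1) x)
    (hgen : ∀ (i : ℕ) (k : ℤ), 0 ≤ k → k ≤ (i : ℤ) - 1 → ∀ x : ℝ,
      a (i + 1) k x = deriv (a i k) x + (k : ℝ) * Q x * a i k x
        + ((n : ℝ) - (k : ℝ)) * a i (k - 1) x + ((k : ℝ) + 1) * P x * a i (k + 1) x) :
    ∀ i : ℕ, i ≤ n - 1 → ∀ x : ℝ,
      a i i x = (Nat.factorial (n - 1) : ℝ) / (Nat.factorial (n - 1 - i) : ℝ)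
      ∧ a (i + 1) i x =
          ((i : ℝ) * ((i : ℝ) + 1) / 2) * Q x *
            ((Nat.factorial (n - 1) : ℝ) / (Nat.factorial (n - 1 - i) : ℝ)) := by
  intro i
  induction i with
  | zero =>
    intro _ x
    have hc : a 0 0 = fun _ => (1:ℝ) := funext h00
    simp only [Nat.cast_zero, Nat.sub_zero]
    constructor
    · rw [h00, div_self (by exact_mod_cast Nat.factorial_ne_zero (n-1))]
    · have h := hsub 0 x
      simp only [Nat.cast_zero, zero_sub, zero_mul, zero_add, sub_zero, CharP.cast_eq_zero] at h
      rw [hc] at h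
      rw [deriv_const, hneg 0 (-1) (by norm_num)] at h
      simp at h
      simp [h]
  | succ i ih =>
    intro hle
    have hle' : i ≤ n - 1 := le_trans (Nat.le_succ i) hle
    have ihh := ih hle'
    have hm1 : 1 ≤ n - 1 - i := by omega
    have hmsub : n - 1 - i = (n - 1 - (i+1)) + 1 := by omega
    have hfac : (Nat.factorial (n - 1 - i) : ℝ)
        = ((n - 1 - i : ℕ) : ℝ) * (Nat.factorial (n - 1 - (i+1)) : ℝ) := by
      rw [hmsub, Nat.factorial_succ]
      push_cast
      ring
    have hcast : ((n : ℝ) - i - 1) = ((n - 1 - i : ℕ) : ℝ) := by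
      push_cast [Nat.cast_sub (by omega : i ≤ n - 1), Nat.cast_sub (by omega : 1 ≤ n)]
      ring
    have h1 : ((n - 1 - i : ℕ) : ℝ) ≠ 0 := by
      have : 0 < n - 1 - i := by omega
      positivity
    have hkey : ((n : ℝ) - i - 1) * ((Nat.factorial (n - 1) : ℝ) / (Nat.factorial (n - 1 - i) : ℝ))
        = (Nat.factorial (n - 1) : ℝ) / (Nat.factorial (n - 1 - (i+1)) : ℝ) := by
      rw [hcast, hfac, ← mul_div_assoc, mul_div_mul_left _ _ h1]
    have hdiagval : ∀ y : ℝ, a (i+1) ((i:ℤ)+1) y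
        = (Nat.factorial (n - 1) : ℝ) / (Nat.factorial (n - 1 - (i+1)) : ℝ) := by
      intro y
      have := hdiag i y
      rw [(ihh y).1] at this
      rw [← hkey]
      exact_mod_cast this
    intro x
    refine ⟨by exact_mod_cast hdiagval x, ?_⟩
    have h := hsub (i+1) x
    rw [show (((i+1 : ℕ)) : ℤ) - 1 = (i:ℤ) by push_cast; ring] at h
    have hconst : a (i+1) ((i+1 : ℕ) : ℤ) = fun _ =>
        (Nat.factorial (n - 1) : ℝ) / (Nat.factorial (n - 1 - (i+1)) : ℝ) := by
      funext y
      exact_mod_cast hdiagval y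
    rw [hconst, deriv_const, (ihh x).2] at h
    rw [h, ← hkey]
    push_cast
    ring
end

section
/- Consider a linear nth order ODE y^{(n)} = Σ_{i=0}^{n−1} F_i(x) y^{(i)}. In the setting of the preceding statement, if 𝐄^{(n)} = Σ_{i=0}^{n−1} F_i 𝐄^{(i)} as polynomials, then comparing coefficients of 𝐩^{n−1−j}𝐪^{j} gives a_{nj} = Σ_{i=0}^{n−1} F_i a_{ij} for each 0 ≤ j ≤ n−1; and solving the two equations with j = n−1 and j = n−2 yields Q = (2/(n(n−1)))F_{n−1} and P = (1/(n(n²−1)))·( ((3n−1)(n−2)/(n(n−1)))F_{n−1}² + 6F_{n−2} − 2(n−2)(dF_{n−1}/dx) ). -/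
open scoped ContDiff in
private theorem aux_deriv_smooth {f : ℝ → ℝ} (h : ContDiff ℝ (⊤ : ℕ∞) f) : ContDiff ℝ (⊤ : ℕ∞) (deriv f) := by
  exact (contDiff_infty_iff_deriv.mp h).2

/-- In the setting of Statement 12, with `𝐩, 𝐪` pointwise linearly
independent, if `𝐄⁽ⁿ⁾ = Σ_{i=0}^{n−1} F_i 𝐄⁽ⁱ⁾` as polynomials, then
`a_{nj} = Σ_{i=0}^{n−1} F_i a_{ij}` for each `0 ≤ j ≤ n−1`, and solving the equations
with `j = n−1, n−2` gives
`Q = (2/(n(n−1))) F_{n−1}` and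
`P = (1/(n(n²−1))) ( ((3n−1)(n−2)/(n(n−1))) F_{n−1}² + 6 F_{n−2} − 2(n−2) F_{n−1}' )`. -/
theorem stmt_13 (n : ℕ) (hn : 2 ≤ n) (P Q : ℝ → ℝ)
    (hP : ContDiff ℝ (⊤ : ℕ∞) P) (hQ : ContDiff ℝ (⊤ : ℕ∞) Q)
    (p₀ p₁ : ℝ → ℝ) (hp₀ : ContDiff ℝ (⊤ : ℕ∞) p₀) (hp₁ : ContDiff ℝ (⊤ : ℕ∞) p₁)
    (hq₀ : ∀ x : ℝ, deriv (deriv p₀) x = P x * p₀ x + Q x * deriv p₀ x)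
    (hq₁ : ∀ x : ℝ, deriv (deriv p₁) x = P x * p₁ x + Q x * deriv p₁ x)
    (hindep : ∀ x : ℝ, p₀ x * deriv p₁ x - p₁ x * deriv p₀ x ≠ 0)
    (a : ℕ → ℤ → ℝ → ℝ)
    (hneg : ∀ (i : ℕ) (k : ℤ), k < 0 → a i k = 0)
    (hhigh : ∀ (i : ℕ) (k : ℤ), (i : ℤ) < k → a i k = 0)
    (h00 : ∀ x : ℝ, a 0 0 x = 1)
    (hdiag : ∀ (i : ℕ) (x : ℝ), a (i + 1) (i + 1) x = ((n : ℝ) - i - 1) * a i i x)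
    (hsub : ∀ (i : ℕ) (x : ℝ), a (i + 1) i x =
      deriv (a i i) x + (i : ℝ) * Q x * a i i x + ((n : ℝ) - i) * a i ((i : ℤ) - 1) x)
    (hgen : ∀ (i : ℕ) (k : ℤ), 0 ≤ k → k ≤ (i : ℤ) - 1 → ∀ x : ℝ,
      a (i + 1) k x = deriv (a i k) x + (k : ℝ) * Q x * a i k x
        + ((n : ℝ) - (k : ℝ)) * a i (k - 1) x + ((k : ℝ) + 1) * P x * a i (k + 1) x)
    (F : ℕ → ℝ → ℝ) (hF : ∀ i, ContDiff ℝ (⊤ : ℕ∞) (F i))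
    (hODE : ∀ (x z₀ z₁ : ℝ),
      iteratedDeriv n (fun x' => (p₀ x' * z₀ + p₁ x' * z₁) ^ (n - 1)) x =
        ∑ i ∈ Finset.range n,
          F i x * iteratedDeriv i (fun x' => (p₀ x' * z₀ + p₁ x' * z₁) ^ (n - 1)) x) :
    (∀ j : ℕ, j ≤ n - 1 → ∀ x : ℝ,
        a n (j : ℤ) x = ∑ i ∈ Finset.range n, F i x * a i (j : ℤ) x)
    ∧ (∀ x : ℝ, Q x = (2 / ((n : ℝ) * ((n : ℝ) - 1))) * F (n - 1) x)
    ∧ (∀ x : ℝ, P x = (1 / ((n : ℝ) * ((n : ℝ) ^ 2 - 1))) *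
        ((((3 * (n : ℝ) - 1) * ((n : ℝ) - 2)) / ((n : ℝ) * ((n : ℝ) - 1))) *
            (F (n - 1) x) ^ 2
          + 6 * F (n - 2) x - 2 * ((n : ℝ) - 2) * deriv (F (n - 1)) x)) := by
  have hn1 : 1 ≤ n := by omega
  have hnR : (2:ℝ) ≤ (n:ℝ) := by exact_mod_cast hn
  -- pointwise zero facts
  have hzfun : ∀ (i : ℕ) (k : ℤ), (i:ℤ) < k → ∀ x : ℝ, a i k x = 0 := by
    intro i k h x; rw [hhigh i k h]; rfl
  have hderiv_zero : deriv (0 : ℝ → ℝ) = (0 : ℝ → ℝ) := by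
    funext y
    show deriv (fun _ => (0:ℝ)) y = 0
    exact deriv_const y 0
  have hderiv_high : ∀ (i : ℕ) (k : ℤ), (i:ℤ) < k → ∀ x : ℝ, deriv (a i k) x = 0 := by
    intro i k h x; rw [hhigh i k h, hderiv_zero]; rfl
  have hnegfun : ∀ (i : ℕ) (k : ℤ), k < 0 → ∀ x : ℝ, a i k x = 0 := by
    intro i k h x; rw [hneg i k h]; rfl
  -- smoothness of the coefficients
  have hsmooth : ∀ (i : ℕ) (k : ℤ), ContDiff ℝ (⊤ : ℕ∞) (a i k) := by
    intro i
    induction i with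
    | zero =>
      intro k
      rcases lt_trichotomy k 0 with h | h | h
      · rw [hneg 0 k h]; exact contDiff_const
      · subst h
        have : a 0 0 = fun _ : ℝ => (1:ℝ) := funext h00
        rw [this]; exact contDiff_const
      · rw [hhigh 0 k (by omega)]; exact contDiff_const
    | succ i IH =>
      intro k
      rcases lt_or_ge k 0 with h | h
      · rw [hneg _ k h]; exact contDiff_const
      rcases lt_trichotomy k (i:ℤ) with h' | h' | h'
      · have heq : a (i+1) k = fun x => deriv (a i k) x + (k:ℝ) * Q x * a i k x
            + ((n:ℝ) - (k:ℝ)) * a i (k-1) x + ((k:ℝ)+1) * P x * a i (k+1) x :=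
          funext (hgen i k h (by omega))
        rw [heq]
        exact (((aux_deriv_smooth (IH k)).add
          ((contDiff_const.mul hQ).mul (IH k))).add
          (contDiff_const.mul (IH (k-1)))).add
          ((contDiff_const.mul hP).mul (IH (k+1)))
      · subst h'
        have heq : a (i+1) (i:ℤ) = fun x => deriv (a i (i:ℤ)) x + (i:ℝ) * Q x * a i (i:ℤ) x
            + ((n:ℝ) - (i:ℝ)) * a i ((i:ℤ)-1) x := funext (hsub i)
        rw [heq]
        exact ((aux_deriv_smooth (IH _)).add
          ((contDiff_const.mul hQ).mul (IH _))).add (contDiff_const.mul (IH _))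
      · rcases eq_or_lt_of_le (by omega : (i:ℤ)+1 ≤ k) with h'' | h''
        · subst h''
          have heq : a (i+1) ((i:ℤ)+1) = fun x => ((n:ℝ) - (i:ℝ) - 1) * a i (i:ℤ) x :=
            funext (hdiag i)
          rw [heq]; exact contDiff_const.mul (IH _)
        · rw [hhigh (i+1) k (by omega)]; exact contDiff_const
  -- unified recurrence
  have hrec : ∀ (i : ℕ) (k : ℤ), 0 ≤ k → ∀ x : ℝ,
      a (i+1) k x = deriv (a i k) x + (k:ℝ) * Q x * a i k x
        + ((n:ℝ) - (k:ℝ)) * a i (k-1) x + ((k:ℝ)+1) * P x * a i (k+1) x := by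
    intro i k hk x
    rcases lt_trichotomy k (i:ℤ) with h | h | h
    · exact hgen i k hk (by omega) x
    · subst h
      rw [hsub i x, hzfun i ((i:ℤ)+1) (by omega) x]
      push_cast; ring
    · rcases eq_or_lt_of_le (by omega : (i:ℤ)+1 ≤ k) with h1 | h1
      · subst h1
        rw [hderiv_high i ((i:ℤ)+1) (by omega) x, hzfun i ((i:ℤ)+1) (by omega) x,
          hzfun i ((i:ℤ)+1+1) (by omega) x, show (i:ℤ)+1-1 = (i:ℤ) from by ring,
          hdiag i x]
        push_cast; ring
      · rw [hzfun (i+1) k (by omega) x, hzfun i k (by omega) x,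
          hzfun i (k-1) (by omega) x, hzfun i (k+1) (by omega) x,
          hderiv_high i k (by omega) x]
        ring
  -- diagonal: a i i = (n-1)(n-2)...(n-i)
  have hcc : ∀ (i : ℕ) (x : ℝ), a i (i:ℤ) x = ∏ t ∈ Finset.range i, ((n:ℝ) - 1 - (t:ℝ)) := by
    intro i
    induction i with
    | zero => intro x; simpa using h00 x
    | succ i IH =>
      intro x
      have h := hrec i ((i:ℤ)+1) (by omega) x
      rw [hderiv_high i ((i:ℤ)+1) (by omega) x, hzfun i ((i:ℤ)+1) (by omega) x,
        hzfun i ((i:ℤ)+1+1) (by omega) x, show (i:ℤ)+1-1 = (i:ℤ) from by ring, IH x] at h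
      rw [show ((i+1:ℕ):ℤ) = (i:ℤ)+1 from by push_cast; ring, h, Finset.prod_range_succ]
      push_cast; ring
  -- first subdiagonal
  have hsub1 : ∀ (i : ℕ) (x : ℝ), a (i+1) (i:ℤ) x
      = ((i:ℝ)+1)*(i:ℝ)/2 * Q x * ∏ t ∈ Finset.range i, ((n:ℝ) - 1 - (t:ℝ)) := by
    intro i
    induction i with
    | zero =>
      intro x
      have h := hrec 0 0 le_rfl x
      have hc0 : a 0 (0:ℤ) = fun _ : ℝ => (1:ℝ) := funext h00
      rw [hc0, hnegfun 0 (0-1) (by norm_num) x, hzfun 0 (0+1) (by norm_num) x] at h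
      simp only [deriv_const] at h
      simpa using h
    | succ i IH =>
      intro x
      have h := hrec (i+1) ((i:ℤ)+1) (by omega) x
      have hidx : ((i+1:ℕ):ℤ) = (i:ℤ)+1 := by push_cast; ring
      have hc : a (i+1) ((i:ℤ)+1) = fun _ : ℝ => ∏ t ∈ Finset.range (i+1), ((n:ℝ) - 1 - (t:ℝ)) := by
        funext y; rw [← hidx]; exact hcc (i+1) y
      rw [hc, hzfun (i+1) ((i:ℤ)+1+1) (by omega) x,
        show (i:ℤ)+1-1 = (i:ℤ) from by ring, IH x] at h
      simp only [deriv_const] at h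
      rw [hidx, h, Finset.prod_range_succ]
      push_cast; ring
  -- second subdiagonal
  have hsub2 : ∀ (m : ℕ) (x : ℝ), a (m+2) (m:ℤ) x
      = ((((m:ℝ)+2)*((m:ℝ)+1)*(m:ℝ)/6) * deriv Q x
          + (((m:ℝ)+1)*((m:ℝ)+2)*(m:ℝ)*(3*(m:ℝ)+1)/24) * Q x ^ 2
          + (((m:ℝ)+1)*((m:ℝ)+2)*(3*(n:ℝ)-2*(m:ℝ)-3)/6) * P x)
        * ∏ t ∈ Finset.range m, ((n:ℝ) - 1 - (t:ℝ)) := by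
    intro m
    induction m with
    | zero =>
      intro x
      have h := hrec 1 0 le_rfl x
      have h10 : a 1 (0:ℤ) = fun _ : ℝ => (0:ℝ) := by
        funext y
        have := hsub1 0 y
        simpa using this
      rw [h10, hnegfun 1 (0-1) (by norm_num) x,
        show (0:ℤ)+1 = ((1:ℕ):ℤ) from by norm_num, hcc 1 x] at h
      simp only [deriv_const] at h
      simp only [Finset.prod_range_one, Nat.cast_zero] at h ⊢
      rw [h]
      push_cast; ring
    | succ m IH =>
      intro x
      have h := hrec (m+2) ((m:ℤ)+1) (by omega) x
      have hidx : ((m+1:ℕ):ℤ) = (m:ℤ)+1 := by push_cast; ring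
      have hcq : a (m+2) ((m:ℤ)+1)
          = fun y => ((((m:ℝ)+2)*((m:ℝ)+1)/2) * ∏ t ∈ Finset.range (m+1), ((n:ℝ) - 1 - (t:ℝ))) * Q y := by
        funext y
        rw [← hidx]
        have := hsub1 (m+1) y
        rw [this]
        push_cast; ring
      rw [hcq, show (m:ℤ)+1-1 = (m:ℤ) from by ring, IH x,
        show (m:ℤ)+1+1 = ((m+2:ℕ):ℤ) from by push_cast; ring, hcc (m+2) x] at h
      rw [deriv_const_mul_field] at h
      rw [hidx, h, Finset.prod_range_succ, Finset.prod_range_succ, Finset.prod_range_succ]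
      push_cast; ring
  -- expansion of iterated derivatives
  have hexp : ∀ z₀ z₁ : ℝ, ∀ i : ℕ, i ≤ n → ∀ x : ℝ,
      iteratedDeriv i (fun x' => (p₀ x' * z₀ + p₁ x' * z₁) ^ (n - 1)) x
        = ∑ k ∈ Finset.range n, a i (k : ℤ) x *
            (p₀ x * z₀ + p₁ x * z₁) ^ (n - 1 - k) *
            (deriv p₀ x * z₀ + deriv p₁ x * z₁) ^ k := by
    intro z₀ z₁
    have hdpz : ∀ x : ℝ, HasDerivAt (fun y => p₀ y * z₀ + p₁ y * z₁)
        (deriv p₀ x * z₀ + deriv p₁ x * z₁) x := fun x =>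
      ((hp₀.differentiable (by simp) x).hasDerivAt.mul_const z₀).add
        ((hp₁.differentiable (by simp) x).hasDerivAt.mul_const z₁)
    have hdqz : ∀ x : ℝ, HasDerivAt (fun y => deriv p₀ y * z₀ + deriv p₁ y * z₁)
        (P x * (p₀ x * z₀ + p₁ x * z₁) + Q x * (deriv p₀ x * z₀ + deriv p₁ x * z₁)) x := by
      intro x
      have h0 :=
        (((aux_deriv_smooth hp₀).differentiable (by simp) x).hasDerivAt.mul_const z₀).add
          (((aux_deriv_smooth hp₁).differentiable (by simp) x).hasDerivAt.mul_const z₁)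
      have he : P x * (p₀ x * z₀ + p₁ x * z₁) + Q x * (deriv p₀ x * z₀ + deriv p₁ x * z₁)
          = deriv (deriv p₀) x * z₀ + deriv (deriv p₁) x * z₁ := by
        rw [hq₀ x, hq₁ x]; ring
      rw [he]; exact h0
    intro i
    induction i with
    | zero =>
      intro _ x
      rw [iteratedDeriv_zero]
      rw [Finset.sum_eq_single 0]
      · simp only [Nat.cast_zero, Nat.sub_zero, pow_zero, mul_one]
        rw [h00 x, one_mul]
      · intro k hk hk0
        rw [hzfun 0 (k:ℤ) (by omega) x]
        ring
      · intro h0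
        exact absurd (Finset.mem_range.mpr (by omega)) h0
    | succ i IH =>
      intro hin x
      have hIH := IH (by omega)
      rw [iteratedDeriv_succ, funext hIH]
      have hder : deriv (fun y => ∑ k ∈ Finset.range n,
            a i (k:ℤ) y * (p₀ y * z₀ + p₁ y * z₁) ^ (n-1-k) * (deriv p₀ y * z₀ + deriv p₁ y * z₁) ^ k) x
          = ∑ k ∈ Finset.range n,
            ((deriv (a i (k:ℤ)) x * (p₀ x * z₀ + p₁ x * z₁) ^ (n-1-k)
                + a i (k:ℤ) x * (((n-1-k : ℕ):ℝ) * (p₀ x * z₀ + p₁ x * z₁) ^ (n-1-k-1)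
                    * (deriv p₀ x * z₀ + deriv p₁ x * z₁)))
              * (deriv p₀ x * z₀ + deriv p₁ x * z₁) ^ k
            + a i (k:ℤ) x * (p₀ x * z₀ + p₁ x * z₁) ^ (n-1-k)
              * (((k : ℕ):ℝ) * (deriv p₀ x * z₀ + deriv p₁ x * z₁) ^ (k-1)
                  * (P x * (p₀ x * z₀ + p₁ x * z₁) + Q x * (deriv p₀ x * z₀ + deriv p₁ x * z₁)))) := by
        refine HasDerivAt.deriv (HasDerivAt.fun_sum fun k _ => ?_)
        exact ((((hsmooth i (k:ℤ)).differentiable (by simp) x).hasDerivAt.mul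
          ((hdpz x).pow _)).mul ((hdqz x).pow _))
      rw [hder]
      set px := p₀ x * z₀ + p₁ x * z₁ with hpxdef
      set qx := deriv p₀ x * z₀ + deriv p₁ x * z₁ with hqxdef
      have hR0 : ∑ k ∈ Finset.range n, a (i+1) (k:ℤ) x * px ^ (n-1-k) * qx ^ k
          = ∑ k ∈ Finset.range n, ((deriv (a i (k:ℤ)) x + ((k:ℤ):ℝ) * Q x * a i (k:ℤ) x
              + ((n:ℝ) - ((k:ℤ):ℝ)) * a i ((k:ℤ)-1) x + (((k:ℤ):ℝ)+1) * P x * a i ((k:ℤ)+1) x)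
              * px ^ (n-1-k) * qx ^ k) :=
        Finset.sum_congr rfl fun k _ => by rw [hrec i (k:ℤ) (Int.natCast_nonneg k) x]
      rw [hR0]
      have hLsplit : ∑ k ∈ Finset.range n,
            ((deriv (a i (k:ℤ)) x * px ^ (n-1-k)
                + a i (k:ℤ) x * (((n-1-k : ℕ):ℝ) * px ^ (n-1-k-1) * qx)) * qx ^ k
              + a i (k:ℤ) x * px ^ (n-1-k)
                * (((k : ℕ):ℝ) * qx ^ (k-1) * (P x * px + Q x * qx)))
          = (∑ k ∈ Finset.range n, deriv (a i (k:ℤ)) x * px ^ (n-1-k) * qx ^ k)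
            + (∑ k ∈ Finset.range n, (k:ℝ) * Q x * a i (k:ℤ) x * px ^ (n-1-k) * qx ^ k)
            + (∑ k ∈ Finset.range n, ((n-1-k : ℕ):ℝ) * a i (k:ℤ) x * px ^ (n-1-k-1) * qx ^ (k+1))
            + (∑ k ∈ Finset.range n, (k:ℝ) * P x * a i (k:ℤ) x * (px ^ (n-1-k) * px) * qx ^ (k-1)) := by
        rw [← Finset.sum_add_distrib, ← Finset.sum_add_distrib, ← Finset.sum_add_distrib]
        refine Finset.sum_congr rfl fun k _ => ?_
        rcases k with _ | k'
        · push_cast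
          simp only [Nat.sub_zero, Nat.zero_sub, pow_zero, zero_add, pow_one]
          ring
        · simp only [pow_succ, Nat.add_sub_cancel]
          push_cast
          ring
      have hRsplit : ∑ k ∈ Finset.range n, ((deriv (a i (k:ℤ)) x + ((k:ℤ):ℝ) * Q x * a i (k:ℤ) x
              + ((n:ℝ) - ((k:ℤ):ℝ)) * a i ((k:ℤ)-1) x + (((k:ℤ):ℝ)+1) * P x * a i ((k:ℤ)+1) x)
              * px ^ (n-1-k) * qx ^ k)
          = (∑ k ∈ Finset.range n, deriv (a i (k:ℤ)) x * px ^ (n-1-k) * qx ^ k)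
            + (∑ k ∈ Finset.range n, (k:ℝ) * Q x * a i (k:ℤ) x * px ^ (n-1-k) * qx ^ k)
            + (∑ k ∈ Finset.range n, ((n:ℝ) - (k:ℝ)) * a i ((k:ℤ)-1) x * px ^ (n-1-k) * qx ^ k)
            + (∑ k ∈ Finset.range n, ((k:ℝ)+1) * P x * a i ((k:ℤ)+1) x * px ^ (n-1-k) * qx ^ k) := by
        rw [← Finset.sum_add_distrib, ← Finset.sum_add_distrib, ← Finset.sum_add_distrib]
        refine Finset.sum_congr rfl fun k _ => ?_
        push_cast
        ring
      have hrange : Finset.range n = Finset.range ((n-1)+1) := by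
        congr 1; omega
      have h33 : (∑ k ∈ Finset.range n, ((n-1-k : ℕ):ℝ) * a i (k:ℤ) x * px ^ (n-1-k-1) * qx ^ (k+1))
          = ∑ k ∈ Finset.range n, ((n:ℝ) - (k:ℝ)) * a i ((k:ℤ)-1) x * px ^ (n-1-k) * qx ^ k := by
        rw [hrange, Finset.sum_range_succ, Finset.sum_range_succ']
        have hlast : ((n-1-(n-1) : ℕ):ℝ) * a i ((n-1:ℕ):ℤ) x * px ^ (n-1-(n-1)-1) * qx ^ ((n-1)+1) = 0 := by
          rw [Nat.sub_self]; push_cast; ring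
        have hfirst : ((n:ℝ) - ((0:ℕ):ℝ)) * a i (((0:ℕ):ℤ)-1) x * px ^ (n-1-0) * qx ^ 0 = 0 := by
          rw [hnegfun i (((0:ℕ):ℤ)-1) (by omega) x]; ring
        rw [hlast, hfirst, add_zero, add_zero]
        refine Finset.sum_congr rfl fun k hk => ?_
        have hk' : k < n - 1 := Finset.mem_range.mp hk
        rw [show ((k+1:ℕ):ℤ) - 1 = (k:ℤ) from by push_cast; ring]
        rw [show n-1-(k+1) = n-1-k-1 from by omega]
        rw [Nat.cast_sub (by omega : k ≤ n-1), Nat.cast_sub (by omega : 1 ≤ n)]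
        push_cast
        ring
      have h44 : (∑ k ∈ Finset.range n, (k:ℝ) * P x * a i (k:ℤ) x * (px ^ (n-1-k) * px) * qx ^ (k-1))
          = ∑ k ∈ Finset.range n, ((k:ℝ)+1) * P x * a i ((k:ℤ)+1) x * px ^ (n-1-k) * qx ^ k := by
        rw [hrange, Finset.sum_range_succ', Finset.sum_range_succ]
        have hfirst : ((0:ℕ):ℝ) * P x * a i ((0:ℕ):ℤ) x * (px ^ (n-1-0) * px) * qx ^ (0-1) = 0 := by
          push_cast; ring
        have hlast : (((n-1:ℕ):ℝ)+1) * P x * a i (((n-1:ℕ):ℤ)+1) x * px ^ (n-1-(n-1)) * qx ^ (n-1) = 0 := by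
          rw [hzfun i (((n-1:ℕ):ℤ)+1) (by omega) x]; ring
        rw [hfirst, hlast, add_zero, add_zero]
        refine Finset.sum_congr rfl fun k hk => ?_
        have hk' : k < n - 1 := Finset.mem_range.mp hk
        rw [show ((k+1:ℕ):ℤ) = (k:ℤ)+1 from by push_cast; ring]
        simp only [Nat.add_sub_cancel]
        rw [← pow_succ px, show (n-1-(k+1))+1 = n-1-k from by omega]
        push_cast
        ring
      rw [hLsplit, hRsplit, h33, h44]
  -- surjectivity of (z₀,z₁) ↦ (p,q)
  have hsurj : ∀ x u v : ℝ, ∃ z₀ z₁ : ℝ,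
      p₀ x * z₀ + p₁ x * z₁ = u ∧ deriv p₀ x * z₀ + deriv p₁ x * z₁ = v := by
    intro x u v
    have hW := hindep x
    refine ⟨(u * deriv p₁ x - v * p₁ x) / (p₀ x * deriv p₁ x - p₁ x * deriv p₀ x),
        (v * p₀ x - u * deriv p₀ x) / (p₀ x * deriv p₁ x - p₁ x * deriv p₀ x), ?_, ?_⟩
    · field_simp
      ring
    · rw [mul_div_assoc', mul_div_assoc', ← add_div, div_eq_iff hW]
      ring
  -- coefficient comparison
  have hcoef : ∀ j : ℕ, j ≤ n - 1 → ∀ x : ℝ,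
      a n (j : ℤ) x = ∑ i ∈ Finset.range n, F i x * a i (j : ℤ) x := by
    intro j hj x
    have key : ∀ u v : ℝ, ∑ k ∈ Finset.range n,
        (a n (k:ℤ) x - ∑ i ∈ Finset.range n, F i x * a i (k:ℤ) x) * u ^ (n-1-k) * v ^ k = 0 := by
      intro u v
      obtain ⟨z₀, z₁, hz₀, hz₁⟩ := hsurj x u v
      have h3 := hODE x z₀ z₁
      rw [hexp z₀ z₁ n le_rfl x, hz₀, hz₁] at h3
      have h4 : ∑ i ∈ Finset.range n, F i x *
            iteratedDeriv i (fun x' => (p₀ x' * z₀ + p₁ x' * z₁) ^ (n - 1)) x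
          = ∑ i ∈ Finset.range n, F i x *
            ∑ k ∈ Finset.range n, a i (k:ℤ) x * u ^ (n-1-k) * v ^ k :=
        Finset.sum_congr rfl fun i hi => by
          rw [hexp z₀ z₁ i (le_of_lt (Finset.mem_range.mp hi)) x, hz₀, hz₁]
      rw [h4] at h3
      have expand : ∑ k ∈ Finset.range n,
            (a n (k:ℤ) x - ∑ i ∈ Finset.range n, F i x * a i (k:ℤ) x) * u ^ (n-1-k) * v ^ k
          = (∑ k ∈ Finset.range n, a n (k:ℤ) x * u ^ (n-1-k) * v ^ k)
            - ∑ i ∈ Finset.range n, F i x * ∑ k ∈ Finset.range n, a i (k:ℤ) x * u ^ (n-1-k) * v ^ k := by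
        simp only [sub_mul, Finset.sum_mul, Finset.mul_sum, Finset.sum_sub_distrib]
        congr 1
        rw [Finset.sum_comm]
        exact Finset.sum_congr rfl fun i _ => Finset.sum_congr rfl fun k _ => by ring
      rw [expand, h3, sub_self]
    have key1 : ∀ u : ℝ, ∑ k ∈ Finset.range n,
        (a n (k:ℤ) x - ∑ i ∈ Finset.range n, F i x * a i (k:ℤ) x) * u ^ (n-1-k) = 0 := by
      intro u
      have := key u 1
      simpa using this
    have hpol : (∑ k ∈ Finset.range n, Polynomial.C
          (a n (k:ℤ) x - ∑ i ∈ Finset.range n, F i x * a i (k:ℤ) x) * Polynomial.X ^ (n-1-k))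
        = (0 : Polynomial ℝ) := by
      apply Polynomial.funext
      intro u
      simp only [Polynomial.eval_finset_sum, Polynomial.eval_mul, Polynomial.eval_pow,
        Polynomial.eval_C, Polynomial.eval_X, Polynomial.eval_zero]
      exact key1 u
    have hcj := congrArg (fun p : Polynomial ℝ => p.coeff (n-1-j)) hpol
    simp only [Polynomial.finset_sum_coeff, Polynomial.coeff_C_mul, Polynomial.coeff_X_pow,
      Polynomial.coeff_zero] at hcj
    rw [Finset.sum_eq_single j] at hcj
    · rw [if_pos rfl, mul_one] at hcj
      linarith [hcj]
    · intro k hk hkj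
      have hk' : k < n := Finset.mem_range.mp hk
      rw [if_neg (by omega), mul_zero]
    · intro hj'
      exact absurd (Finset.mem_range.mpr (by omega)) hj'
  have hn0 : (n:ℝ) ≠ 0 := by linarith
  have hnm1 : (n:ℝ) - 1 ≠ 0 := by linarith
  have hnp1 : (n:ℝ) + 1 ≠ 0 := by linarith
  have hn21 : (n:ℝ)^2 - 1 ≠ 0 := by nlinarith
  have hprodpos : ∀ m : ℕ, m ≤ n - 1 → (0:ℝ) < ∏ t ∈ Finset.range m, ((n:ℝ) - 1 - (t:ℝ)) := by
    intro m hm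
    apply Finset.prod_pos
    intro t ht
    have h1 : t < m := Finset.mem_range.mp ht
    have h2 : ((t:ℕ):ℝ) < ((n-1:ℕ):ℝ) := by exact_mod_cast (by omega : t < n - 1)
    rw [Nat.cast_sub hn1, Nat.cast_one] at h2
    linarith
  have hcast1 : ((n-1:ℕ):ℝ) = (n:ℝ) - 1 := by rw [Nat.cast_sub hn1, Nat.cast_one]
  have hcast2 : ((n-2:ℕ):ℝ) = (n:ℝ) - 2 := by rw [Nat.cast_sub hn]; norm_num
  -- the formula for Q
  have hQform : ∀ x : ℝ, Q x = 2 / ((n:ℝ) * ((n:ℝ) - 1)) * F (n-1) x := by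
    intro x
    have h := hcoef (n-1) le_rfl x
    have h1 := hsub1 (n-1) x
    rw [show n-1+1 = n from by omega] at h1
    rw [h1] at h
    have hsum : ∑ i ∈ Finset.range n, F i x * a i ((n-1:ℕ):ℤ) x
        = F (n-1) x * a (n-1) ((n-1:ℕ):ℤ) x :=
      Finset.sum_eq_single_of_mem (n-1) (Finset.mem_range.mpr (by omega))
        (fun i hi hine => by
          rw [hzfun i ((n-1:ℕ):ℤ) (by have := Finset.mem_range.mp hi; omega) x]; ring)
    rw [hsum, hcc (n-1) x] at h
    have hpne := ne_of_gt (hprodpos (n-1) le_rfl)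
    have h2 := mul_right_cancel₀ hpne h
    rw [hcast1] at h2
    field_simp
    linear_combination 2 * h2
  have hQfun : Q = fun y => 2 / ((n:ℝ) * ((n:ℝ) - 1)) * F (n-1) y := funext hQform
  -- the formula for P
  have hPform : ∀ x : ℝ, P x = (1 / ((n : ℝ) * ((n : ℝ) ^ 2 - 1))) *
      ((((3 * (n : ℝ) - 1) * ((n : ℝ) - 2)) / ((n : ℝ) * ((n : ℝ) - 1))) *
          (F (n - 1) x) ^ 2
        + 6 * F (n - 2) x - 2 * ((n : ℝ) - 2) * deriv (F (n - 1)) x) := by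
    intro x
    have h := hcoef (n-2) (by omega) x
    have h1 := hsub2 (n-2) x
    rw [show n-2+2 = n from by omega] at h1
    rw [h1] at h
    rw [show Finset.range n = Finset.range ((n-2)+1+1) from by congr 1; omega,
      Finset.sum_range_succ, Finset.sum_range_succ] at h
    rw [Finset.sum_eq_zero (fun i hi => by
        rw [hzfun i ((n-2:ℕ):ℤ) (by have := Finset.mem_range.mp hi; omega) x]; ring),
      zero_add] at h
    rw [hcc (n-2) x, hsub1 (n-2) x] at h
    rw [show n-2+1 = n-1 from by omega] at h
    have hQd : deriv Q x = 2 / ((n:ℝ) * ((n:ℝ) - 1)) * deriv (F (n-1)) x := by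
      rw [hQfun, deriv_const_mul_field]
    rw [hQd, hQform x, hcast2] at h
    have hpne := ne_of_gt (hprodpos (n-2) (by omega))
    have h4 : ((n:ℝ)*((n:ℝ)-1)*((n:ℝ)+1)/6) * P x
        = F (n-2) x
          + ((n:ℝ)-1)*((n:ℝ)-2)/2 * (2/((n:ℝ)*((n:ℝ)-1)) * F (n-1) x) * F (n-1) x
          - ((n:ℝ)*((n:ℝ)-1)*((n:ℝ)-2)/6) * (2/((n:ℝ)*((n:ℝ)-1)) * deriv (F (n-1)) x)
          - (((n:ℝ)-1)*(n:ℝ)*((n:ℝ)-2)*(3*(n:ℝ)-5)/24) * (2/((n:ℝ)*((n:ℝ)-1)) * F (n-1) x)^2 := by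
      apply mul_right_cancel₀ hpne
      linear_combination h
    have hsolve : P x = 6/((n:ℝ)*((n:ℝ)-1)*((n:ℝ)+1))
        * (((n:ℝ)*((n:ℝ)-1)*((n:ℝ)+1)/6) * P x) := by
      field_simp
    rw [hsolve, h4]
    field_simp
    ring
  exact ⟨hcoef, hQform, hPform⟩
end

section
/- With the pairing ⟨·,·⟩_p as above, if 𝐭 = 𝐩^{n−1} is a perfect (n−1)st power of a linear form 𝐩 ∈ V₁, then ⟨𝐭,𝐭⟩_p = 0 for every p ≥ 1. In particular, for n = 4 the quartic form Q(X) = ⟨⟨X,X⟩₂, ⟨X,X⟩₂⟩₂ on V₃ vanishes on all perfect cubes X = 𝐩³, and more generally on all polynomials of the form 𝐩²𝐫 with 𝐫 ∈ V₁. -/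
open MvPolynomial

/-- The standard symplectic form `ε` on indices `{0,1}`: `ε₀₁ = 1`, `ε₁₀ = −1`. -/
def epsSymp : Fin 2 → Fin 2 → ℝ :=
  fun A B => if A = 0 ∧ B = 1 then 1 else if A = 1 ∧ B = 0 then -1 else 0

/-- The pairing `⟨t, s⟩_p` on polynomials in two variables, defined recursively. -/
noncomputable def pairing : ℕ → MvPolynomial (Fin 2) ℝ → MvPolynomial (Fin 2) ℝ →
    MvPolynomial (Fin 2) ℝ
  | 0, t, s => t * s
  | (p + 1), t, s =>
      ∑ A : Fin 2, ∑ B : Fin 2,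
        C (epsSymp A B) * pairing p (pderiv A t) (pderiv B s)

/-!
A linear form `𝐩` has constant partial derivatives `∂_A 𝐩 = α_A`, so every partial derivative of
`𝐩^m` is a multiple of the single polynomial `𝐩^(m-1)`, and `⟨𝐩^m, 𝐩^m⟩_(k+1)` collapses to
`(∑ ε_AB α_A α_B) ⟨𝐩^(m-1), 𝐩^(m-1)⟩_k = 0` by antisymmetry of `ε`.

For `X = 𝐩²𝐫`, the Hessian of `X` is `H = 2𝐫 αα^T + 2𝐩 (αβ^T + βα^T)` with `β = ∂𝐫`, and
`⟨X, X⟩₂ = 2 det H = -8 (α₀β₁ - α₁β₀)² 𝐩²`; hence `Q(X)` is a constant times `⟨𝐩², 𝐩²⟩₂ = 0`.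
-/

namespace MvPolynomial.IsHomogeneous

variable {σ R : Type*} [CommSemiring R] {φ : MvPolynomial σ R}

theorem pderiv_eq_C (h : φ.IsHomogeneous 1) (i : σ) :
    pderiv i φ = C ((pderiv i φ).coeff 0) :=
  totalDegree_eq_zero_iff_eq_C.mp ((totalDegree_zero_iff_isHomogeneous σ).mpr h.pderiv)

end MvPolynomial.IsHomogeneous

theorem MvPolynomial.pderiv_pow_eq_C_mul {σ R : Type*} [CommSemiring R] {φ : MvPolynomial σ R}
    {i : σ} {a : R} (h : pderiv i φ = C a) (m : ℕ) :
    pderiv i (φ ^ m) = C (m * a) * φ ^ (m - 1) := by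
  rw [pderiv_pow, h, map_mul, map_natCast]
  ring

theorem pairing_C_mul_left (k : ℕ) (a : ℝ) (t s : MvPolynomial (Fin 2) ℝ) :
    pairing k (C a * t) s = C a * pairing k t s := by
  induction k generalizing t s with
  | zero => simp only [pairing, mul_assoc]
  | succ k ih =>
      simp only [pairing, pderiv_C_mul, ih, Finset.mul_sum, mul_left_comm]

theorem pairing_C_mul_right (k : ℕ) (a : ℝ) (t s : MvPolynomial (Fin 2) ℝ) :
    pairing k t (C a * s) = C a * pairing k t s := by
  induction k generalizing t s with
  | zero => simp only [pairing, mul_left_comm]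
  | succ k ih =>
      simp only [pairing, pderiv_C_mul, ih, Finset.mul_sum, mul_left_comm]

theorem pairing_succ_self_eq_zero_of_pderiv_eq_C_mul {t : MvPolynomial (Fin 2) ℝ} (u : MvPolynomial (Fin 2) ℝ)
    (c : Fin 2 → ℝ) (h : ∀ A, pderiv A t = C (c A) * u) (k : ℕ) :
    pairing (k + 1) t t = 0 := by
  simp only [pairing, Fin.sum_univ_two, h, pairing_C_mul_left, pairing_C_mul_right, epsSymp]
  norm_num
  ring

theorem pairing_succ_pow_self_eq_zero {p : MvPolynomial (Fin 2) ℝ} (hp : p.IsHomogeneous 1)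
    (m k : ℕ) : pairing (k + 1) (p ^ m) (p ^ m) = 0 :=
  pairing_succ_self_eq_zero_of_pderiv_eq_C_mul (p ^ (m - 1)) _
    (fun A => pderiv_pow_eq_C_mul (hp.pderiv_eq_C A) m) k

theorem pairing_two_sq_mul_self {p r : MvPolynomial (Fin 2) ℝ} {α β : Fin 2 → ℝ}
    (hp : ∀ A, pderiv A p = C (α A)) (hr : ∀ A, pderiv A r = C (β A)) :
    pairing 2 (p ^ 2 * r) (p ^ 2 * r) = C (-8 * (α 0 * β 1 - α 1 * β 0) ^ 2) * p ^ 2 := by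
  simp only [pairing, Fin.sum_univ_two, epsSymp, sq, pderiv_mul, map_add, hp, hr, pderiv_C,
    map_mul, map_sub, map_neg, map_ofNat]
  norm_num
  ring

/-- If `𝐭 = 𝐩^{n−1}` is a perfect power of a linear form `𝐩`, then
`⟨𝐭,𝐭⟩_p = 0` for every `p ≥ 1`; and for `n = 4`, the quartic
`Q(X) = ⟨⟨X,X⟩₂,⟨X,X⟩₂⟩₂` vanishes on all `X = 𝐩²𝐫` with `𝐩, 𝐫` linear (in particular
on all perfect cubes `X = 𝐩³`). -/
theorem stmt_17 :
    (∀ p : MvPolynomial (Fin 2) ℝ, p.IsHomogeneous 1 → ∀ (n k : ℕ), 1 ≤ k →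
        pairing k (p ^ (n - 1)) (p ^ (n - 1)) = 0)
    ∧ (∀ p r : MvPolynomial (Fin 2) ℝ, p.IsHomogeneous 1 → r.IsHomogeneous 1 →
        pairing 2 (pairing 2 (p ^ 2 * r) (p ^ 2 * r))
          (pairing 2 (p ^ 2 * r) (p ^ 2 * r)) = 0) := by
  constructor
  · intro p hp n k hk
    obtain ⟨k, rfl⟩ := Nat.exists_eq_add_of_le' hk
    exact pairing_succ_pow_self_eq_zero hp (n - 1) k
  · intro p r hp hr
    rw [pairing_two_sq_mul_self hp.pderiv_eq_C hr.pderiv_eq_C, pairing_C_mul_left,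
      pairing_C_mul_right, pairing_succ_pow_self_eq_zero hp 2 1, mul_zero, mul_zero]
end
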